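/- arXiv:2507.08581 — 8 statements merged into one kernel-verified Lean document; each statement's English description precedes it below -/
import Mathlib

section
/- Coincidence lemma for formulas with minimality: for any dynamic theory Δ and any Λ-formula F, any two states μ, μ̃ ∈ S with μ =_{FV^sem(F)} μ̃ satisfy μ ∈ ⟦F⟧ iff μ̃ ∈ ⟦F⟧; moreover FV^sem(F) is the smallest such set, i.e. if X ⊆ V is any set such that all states agreeing on X have the same truth value for F, then FV^sem(F) ⊆ X. -/
/-- A dynamic theory over variables `V`, first-order atoms `A`, programs `P`,
state space `S` and universe `U`. -/
structure DynamicTheory (V : Type*) (A : Type*) (P : Type*) (S : Type*) (U : Type*) where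
  state_nonempty : Nonempty S
  univ_nonempty : Nonempty U
  /-- variable evaluation -/
  val : S → V → U
  /-- interpolation property of the state space -/
  interpolation : ∀ (μ ν : S) (W : Set V), ∃ ω : S,
    (∀ v ∈ W, val ω v = val μ v) ∧ (∀ v ∉ W, val ω v = val ν v)
  /-- atom evaluation -/
  atomEval : A → Set S
  /-- free-variable overapproximation for atoms -/
  fvA : A → Set V
  fvA_finite : ∀ a : A, (fvA a).Finite
  fvA_overapprox : ∀ (a : A) (μ ν : S),
    (∀ v ∈ fvA a, val μ v = val ν v) → (μ ∈ atomEval a ↔ ν ∈ atomEval a)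
  /-- program evaluation -/
  progEval : P → Set (S × S)
  /-- free-variable overapproximation for programs -/
  fvP : P → Set V
  fvP_finite : ∀ p : P, (fvP p).Finite
  progEval_ext : ∀ (p : P) (μ ν ω : S),
    (∀ v : V, val μ v = val ν v) → ((μ, ω) ∈ progEval p ↔ (ν, ω) ∈ progEval p)
  fvP_overapprox : ∀ (p : P) (W : Set V), fvP p ⊆ W →
    ∀ (μ ν ω : S), (∀ v ∈ W, val μ v = val ν v) → (μ, ω) ∈ progEval p →
      ∃ ω' : S, (ν, ω') ∈ progEval p ∧ ∀ v ∈ W, val ω v = val ω' v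

/-- Λ-formulas over variables `V`, atoms `A` and programs `P`. -/
inductive Formula (V : Type*) (A : Type*) (P : Type*) where
  | atom : A → Formula V A P
  | not : Formula V A P → Formula V A P
  | and : Formula V A P → Formula V A P → Formula V A P
  | all : V → Formula V A P → Formula V A P
  | box : P → Formula V A P → Formula V A P

namespace Formula

/-- Semantics of Λ-formulas. -/
def sem {V A P S U : Type*} (val : S → V → U) (aEval : A → Set S)
    (pEval : P → Set (S × S)) : Formula V A P → Set S
  | atom a => aEval a
  | not F => (sem val aEval pEval F)ᶜ
  | and F G => sem val aEval pEval F ∩ sem val aEval pEval G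
  | all v F => {μ : S | ∀ ν : S, (∀ w : V, w ≠ v → val μ w = val ν w) →
      ν ∈ sem val aEval pEval F}
  | box p F => {μ : S | ∀ ν : S, (μ, ν) ∈ pEval p → ν ∈ sem val aEval pEval F}

/-- Implication as the usual abbreviation. -/
def imp {V A P : Type*} (F G : Formula V A P) : Formula V A P := not (and F (not G))

/-- Bi-implication as the usual abbreviation. -/
def iff {V A P : Type*} (F G : Formula V A P) : Formula V A P := and (imp F G) (imp G F)

/-- The diamond modality `⟨p⟩F = ¬[p]¬F`. -/
def dia {V A P : Type*} (p : P) (F : Formula V A P) : Formula V A P := not (box p (not F))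

/-- Existential quantification `∃v F = ¬∀v ¬F`. -/
def exi {V A P : Type*} (v : V) (F : Formula V A P) : Formula V A P := not (all v (not F))

/-- Mapping a formula along renamings of variables, atoms and programs. -/
def map {V A P V' A' P' : Type*} (fv : V → V') (fa : A → A') (fp : P → P') :
    Formula V A P → Formula V' A' P'
  | atom a => atom (fa a)
  | not F => not (map fv fa fp F)
  | and F G => and (map fv fa fp F) (map fv fa fp G)
  | all v F => all (fv v) (map fv fa fp F)
  | box p F => box (fp p) (map fv fa fp F)

end Formula

/-- Validity: the formula holds in every state. -/
def Valid {V A P S U : Type*} (val : S → V → U) (aEval : A → Set S)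
    (pEval : P → Set (S × S)) (F : Formula V A P) : Prop :=
  Formula.sem val aEval pEval F = Set.univ

/-- Semantically free variables of a formula. -/
def fvSemFml {V A P S U : Type*} (val : S → V → U) (aEval : A → Set S)
    (pEval : P → Set (S × S)) (F : Formula V A P) : Set V :=
  {v : V | ∃ μ μ' : S, (∀ w : V, w ≠ v → val μ w = val μ' w) ∧
      μ ∈ Formula.sem val aEval pEval F ∧ μ' ∉ Formula.sem val aEval pEval F}

/-- Semantically free variables of a program. -/
def fvSemProg {V P S U : Type*} (val : S → V → U) (pEval : P → Set (S × S)) (p : P) : Set V :=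
  {v : V | ∃ μ μ' ν : S, (∀ w : V, w ≠ v → val μ w = val μ' w) ∧ (μ, ν) ∈ pEval p ∧
      ¬ ∃ ν' : S, (∀ w : V, w ≠ v → val ν w = val ν' w) ∧ (μ', ν') ∈ pEval p}

/-- Semantically bound variables of a program. -/
def bvSemProg {V P S U : Type*} (val : S → V → U) (pEval : P → Set (S × S)) (p : P) : Set V :=
  {v : V | ∃ μ μ' : S, (μ, μ') ∈ pEval p ∧ val μ v ≠ val μ' v}

/-- Syntactic free variables of a formula. -/
def fvSyn {V A P : Type*} (fvA : A → Set V) (fvP : P → Set V) : Formula V A P → Set V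
  | .atom a => fvA a
  | .not F => fvSyn fvA fvP F
  | .and F G => fvSyn fvA fvP F ∪ fvSyn fvA fvP G
  | .all v F => fvSyn fvA fvP F \ {v}
  | .box p F => fvP p ∪ fvSyn fvA fvP F

/-- First-order (modality-free) formulas are formulas whose programs are drawn from
`Empty`; this is their semantics. -/
def foSem {V A S U : Type*} (val : S → V → U) (aEval : A → Set S)
    (F : Formula V A Empty) : Set S :=
  Formula.sem val aEval (fun e => e.elim) F

/-- Embedding of first-order formulas into formulas over any program set. -/
def embFO {V A P : Type*} (F : Formula V A Empty) : Formula V A P :=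
  Formula.map id id (fun e => e.elim) F

/-- Program evaluation of the havoc lift: original programs keep their behaviour and
`v := *` (encoded as `Sum.inr v`) relates states that agree outside `v`. -/
def havocProgEval {V P S U : Type*} (val : S → V → U) (pEval : P → Set (S × S)) :
    P ⊕ V → Set (S × S)
  | Sum.inl p => pEval p
  | Sum.inr v => {x : S × S | ∀ w : V, w ≠ v → val x.1 w = val x.2 w}

/-- Free-variable overapproximation of the havoc lift. -/
def havocFvP {V P : Type*} (fvP : P → Set V) : P ⊕ V → Set V
  | Sum.inl p => fvP p
  | Sum.inr _ => ∅

/-- Regular programs over base programs `P`, with tests on first-order formulas. -/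
inductive RegProg (V : Type*) (A : Type*) (P : Type*) where
  | base : P → RegProg V A P
  | seq : RegProg V A P → RegProg V A P → RegProg V A P
  | choice : RegProg V A P → RegProg V A P → RegProg V A P
  | test : Formula V A Empty → RegProg V A P
  | star : RegProg V A P → RegProg V A P

/-- Relational composition. -/
def relComp {S : Type*} (R Q : Set (S × S)) : Set (S × S) :=
  {x : S × S | ∃ ν : S, (x.1, ν) ∈ R ∧ (ν, x.2) ∈ Q}

/-- `n`-fold iteration of a relation, starting from the identity up to variable values. -/
def relIter {V S U : Type*} (val : S → V → U) (R : Set (S × S)) : ℕ → Set (S × S)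
  | 0 => {x : S × S | ∀ v : V, val x.1 v = val x.2 v}
  | n + 1 => relComp R (relIter val R n)

/-- Program evaluation of the regular closure. -/
def regProgEval {V A P S U : Type*} (val : S → V → U) (aEval : A → Set S)
    (pEval : P → Set (S × S)) : RegProg V A P → Set (S × S)
  | .base r => pEval r
  | .seq p q => relComp (regProgEval val aEval pEval p) (regProgEval val aEval pEval q)
  | .choice p q => regProgEval val aEval pEval p ∪ regProgEval val aEval pEval q
  | .test F => {x : S × S | x.1 ∈ foSem val aEval F ∧ ∀ v : V, val x.1 v = val x.2 v}
  | .star p => ⋃ n : ℕ, relIter val (regProgEval val aEval pEval p) n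

/-- Free-variable overapproximation of the regular closure. -/
def regFvP {V A P : Type*} (fvA : A → Set V) (fvP : P → Set V) : RegProg V A P → Set V
  | .base r => fvP r
  | .seq p q => regFvP fvA fvP p ∪ regFvP fvA fvP q
  | .choice p q => regFvP fvA fvP p ∪ regFvP fvA fvP q
  | .test F => fvSyn fvA (fun e => e.elim) F
  | .star p => regFvP fvA fvP p

/-- Bound-variable overapproximation of the regular closure. -/
def regBvP {V A P : Type*} (bvP : P → Set V) : RegProg V A P → Set V
  | .base r => bvP r
  | .seq p q => regBvP bvP p ∪ regBvP bvP q
  | .choice p q => regBvP bvP p ∪ regBvP bvP q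
  | .test _ => ∅
  | .star p => regBvP bvP p

/-- The set of values a variable can take. -/
def valueSet {V S U : Type*} (val : S → V → U) (v : V) : Set U :=
  {δ : U | ∃ μ : S, val μ v = δ}

/-- Twin variables: variables with the same value set. -/
def TwinVars {V S U : Type*} (val : S → V → U) (v w : V) : Prop :=
  valueSet val v = valueSet val w

/-- Twin variable vectors: componentwise twins of equal length. -/
def TwinLists {V S U : Type*} (val : S → V → U) (x xp : List V) : Prop :=
  x.length = xp.length ∧ ∀ q ∈ x.zip xp, TwinVars val q.1 q.2

/-- FOL expressiveness relative to a chosen equality predicate `eq`: infinitely many twin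
variables, soundness of the equality predicate on twins, and first-order renditions of all
programs (stated semantically: the rendition is valid-equivalent to `⟨p⟩(x ≐ x⁺)`). -/
def FOLExpressive {V A P S U : Type*} (val : S → V → U) (aEval : A → Set S)
    (pEval : P → Set (S × S)) (eq : V → V → Formula V A Empty) : Prop :=
  (∀ v : V, {w : V | TwinVars val v w}.Infinite) ∧
  (∀ v w : V, TwinVars val v w →
    ∀ μ : S, μ ∈ foSem val aEval (eq v w) ↔ val μ v = val μ w) ∧
  (∀ (p : P) (x xp : List V), TwinLists val x xp → x.Nodup → xp.Nodup →
    fvSemProg val pEval p ∪ bvSemProg val pEval p ⊆ {v : V | v ∈ x} →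
    (∀ v ∈ x, v ∉ xp) →
    ∃ Sp : Formula V A Empty, ∀ μ : S,
      μ ∈ foSem val aEval Sp ↔
        ∃ ν : S, (μ, ν) ∈ pEval p ∧ ∀ q ∈ x.zip xp, val ν q.1 = val ν q.2)

/-- Variable evaluation of the heterogeneous (product) state space. -/
def hetVal {V0 V1 S0 S1 U0 U1 : Type*} (val0 : S0 → V0 → U0) (val1 : S1 → V1 → U1) :
    S0 × S1 → V0 ⊕ V1 → U0 ⊕ U1 := fun μ v =>
  match v with
  | Sum.inl v => Sum.inl (val0 μ.1 v)
  | Sum.inr v => Sum.inr (val1 μ.2 v)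

/-- Atom evaluation of the simple heterogeneous theory. -/
def hetAtomEval {A0 A1 Ac S0 S1 : Type*} (aEval0 : A0 → Set S0) (aEval1 : A1 → Set S1)
    (aEvalC : Ac → Set (S0 × S1)) : A0 ⊕ A1 ⊕ Ac → Set (S0 × S1) := fun a =>
  match a with
  | Sum.inl a => {μ : S0 × S1 | μ.1 ∈ aEval0 a}
  | Sum.inr (Sum.inl a) => {μ : S0 × S1 | μ.2 ∈ aEval1 a}
  | Sum.inr (Sum.inr a) => aEvalC a

/-- Free variables of atoms of the simple heterogeneous theory. -/
def hetFvA {V0 V1 A0 A1 Ac : Type*} (fvA0 : A0 → Set V0) (fvA1 : A1 → Set V1)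
    (fvAC : Ac → Set (V0 ⊕ V1)) : A0 ⊕ A1 ⊕ Ac → Set (V0 ⊕ V1) := fun a =>
  match a with
  | Sum.inl a => Sum.inl '' fvA0 a
  | Sum.inr (Sum.inl a) => Sum.inr '' fvA1 a
  | Sum.inr (Sum.inr a) => fvAC a

/-- Program evaluation of the simple heterogeneous theory: a program of one component acts
on its component while the other component keeps all its variable values. -/
def hetProgEval {V0 V1 P0 P1 S0 S1 U0 U1 : Type*} (val0 : S0 → V0 → U0)
    (val1 : S1 → V1 → U1) (pEval0 : P0 → Set (S0 × S0)) (pEval1 : P1 → Set (S1 × S1)) :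
    P0 ⊕ P1 → Set ((S0 × S1) × (S0 × S1)) := fun p =>
  match p with
  | Sum.inl p => {x | (x.1.1, x.2.1) ∈ pEval0 p ∧ ∀ v : V1, val1 x.1.2 v = val1 x.2.2 v}
  | Sum.inr p => {x | (x.1.2, x.2.2) ∈ pEval1 p ∧ ∀ v : V0, val0 x.1.1 v = val0 x.2.1 v}

/-- Free variables of programs of the simple heterogeneous theory. -/
def hetFvP {V0 V1 P0 P1 : Type*} (fvP0 : P0 → Set V0) (fvP1 : P1 → Set V1) :
    P0 ⊕ P1 → Set (V0 ⊕ V1) := fun p =>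
  match p with
  | Sum.inl p => Sum.inl '' fvP0 p
  | Sum.inr p => Sum.inr '' fvP1 p

section CoincidenceAux

variable {V A P S U : Type*} (Δ : DynamicTheory V A P S U)

lemma fvSyn_finite' (F : Formula V A P) : (fvSyn Δ.fvA Δ.fvP F).Finite := by
  induction F with
  | atom a => exact Δ.fvA_finite a
  | not F ih => exact ih
  | and F G ihF ihG => exact ihF.union ihG
  | all v F ih => exact ih.diff
  | box p F ih => exact (Δ.fvP_finite p).union ih

lemma syn_coincidence (F : Formula V A P) :
    ∀ W : Set V, fvSyn Δ.fvA Δ.fvP F ⊆ W →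
    ∀ μ μ' : S, (∀ v ∈ W, Δ.val μ v = Δ.val μ' v) →
    μ ∈ Formula.sem Δ.val Δ.atomEval Δ.progEval F →
    μ' ∈ Formula.sem Δ.val Δ.atomEval Δ.progEval F := by
  induction F with
  | atom a =>
    intro W hW μ μ' h hμ
    exact (Δ.fvA_overapprox a μ μ' (fun v hv => h v (hW hv))).mp hμ
  | not F ih =>
    intro W hW μ μ' h hμ hc
    exact hμ (ih W hW μ' μ (fun v hv => (h v hv).symm) hc)
  | and F G ihF ihG =>
    intro W hW μ μ' h hμ
    exact ⟨ihF W (fun v hv => hW (Or.inl hv)) μ μ' h hμ.1,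
           ihG W (fun v hv => hW (Or.inr hv)) μ μ' h hμ.2⟩
  | all v F ih =>
    intro W hW μ μ' h hμ ν' hν'
    obtain ⟨ν, hν1, hν2⟩ := Δ.interpolation ν' μ ({v} : Set V)
    have hνμ : ∀ w : V, w ≠ v → Δ.val μ w = Δ.val ν w := by
      intro w hw
      exact (hν2 w (by simpa using hw)).symm
    have hmem : ν ∈ Formula.sem Δ.val Δ.atomEval Δ.progEval F := hμ ν hνμ
    refine ih (insert v W) ?_ ν ν' ?_ hmem
    · intro w hw
      by_cases hwv : w = v
      · exact Or.inl hwv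
      · exact Or.inr (hW ⟨hw, hwv⟩)
    · intro w hw
      rcases hw with hw | hw
      · subst hw
        exact hν1 w rfl
      · by_cases hwv : w = v
        · subst hwv; exact hν1 w rfl
        · rw [(hνμ w hwv).symm, h w hw, hν' w hwv]
  | box p F ih =>
    intro W hW μ μ' h hμ ν' hν'
    obtain ⟨ν, hν1, hν2⟩ := Δ.fvP_overapprox p W (fun v hv => hW (Or.inl hv)) μ' μ ν'
      (fun v hv => (h v hv).symm) hν'
    exact ih W (fun v hv => hW (Or.inr hv)) ν ν'
      (fun v hv => (hν2 v hv).symm) (hμ ν hν1)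

lemma sem_notfv (F : Formula V A P) (v : V)
    (hv : v ∉ fvSemFml Δ.val Δ.atomEval Δ.progEval F) (μ μ' : S)
    (h : ∀ w : V, w ≠ v → Δ.val μ w = Δ.val μ' w) :
    μ ∈ Formula.sem Δ.val Δ.atomEval Δ.progEval F ↔
    μ' ∈ Formula.sem Δ.val Δ.atomEval Δ.progEval F := by
  constructor <;> intro hm <;> by_contra hc
  · exact hv ⟨μ, μ', h, hm, hc⟩
  · exact hv ⟨μ', μ, fun w hw => (h w hw).symm, hm, hc⟩

lemma sem_step [DecidableEq V] (F : Formula V A P) (D : Finset V) :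
    (∀ v ∈ D, v ∉ fvSemFml Δ.val Δ.atomEval Δ.progEval F) →
    ∀ μ μ' : S, (∀ v ∉ D, Δ.val μ v = Δ.val μ' v) →
    (μ ∈ Formula.sem Δ.val Δ.atomEval Δ.progEval F ↔
      μ' ∈ Formula.sem Δ.val Δ.atomEval Δ.progEval F) := by
  induction D using Finset.induction_on with
  | empty =>
    intro _ μ μ' h
    constructor
    · exact syn_coincidence Δ F Set.univ (fun v _ => trivial) μ μ'
        (fun v _ => h v (by simp))
    · exact syn_coincidence Δ F Set.univ (fun v _ => trivial) μ' μ
        (fun v _ => (h v (by simp)).symm)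
  | @insert v D' hvD ih =>
    intro hdisj μ μ' h
    obtain ⟨ω, hω1, hω2⟩ := Δ.interpolation μ' μ ({v} : Set V)
    have h1 : μ ∈ Formula.sem Δ.val Δ.atomEval Δ.progEval F ↔
        ω ∈ Formula.sem Δ.val Δ.atomEval Δ.progEval F :=
      sem_notfv Δ F v (hdisj v (Finset.mem_insert_self v D')) μ ω
        (fun w hw => (hω2 w (by simpa using hw)).symm)
    have h2 : ω ∈ Formula.sem Δ.val Δ.atomEval Δ.progEval F ↔
        μ' ∈ Formula.sem Δ.val Δ.atomEval Δ.progEval F := by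
      refine ih (fun w hw => hdisj w (Finset.mem_insert_of_mem hw)) ω μ' ?_
      intro w hw
      by_cases hwv : w = v
      · subst hwv; exact hω1 w rfl
      · rw [hω2 w (by simpa using hwv)]
        exact h w (by simp [hwv, hw, Finset.mem_insert])
    exact h1.trans h2

end CoincidenceAux

/-- Coincidence lemma for formulas with minimality: any two states that
agree on `FV^sem(F)` give `F` the same truth value, and `FV^sem(F)` is the smallest set
with this property. -/
theorem formula_coincidence_and_minimality
    {V A P S U : Type*} (Δ : DynamicTheory V A P S U) (F : Formula V A P) :
    (∀ μ μ' : S,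
      (∀ v ∈ fvSemFml Δ.val Δ.atomEval Δ.progEval F, Δ.val μ v = Δ.val μ' v) →
      (μ ∈ Formula.sem Δ.val Δ.atomEval Δ.progEval F ↔
        μ' ∈ Formula.sem Δ.val Δ.atomEval Δ.progEval F)) ∧
    (∀ X : Set V,
      (∀ μ μ' : S, (∀ v ∈ X, Δ.val μ v = Δ.val μ' v) →
        (μ ∈ Formula.sem Δ.val Δ.atomEval Δ.progEval F ↔
          μ' ∈ Formula.sem Δ.val Δ.atomEval Δ.progEval F)) →
      fvSemFml Δ.val Δ.atomEval Δ.progEval F ⊆ X) := by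
  constructor
  · intro μ μ' h
    obtain ⟨ω, hω1, hω2⟩ := Δ.interpolation μ' μ (fvSyn Δ.fvA Δ.fvP F)
    have hstep : μ ∈ Formula.sem Δ.val Δ.atomEval Δ.progEval F ↔
        ω ∈ Formula.sem Δ.val Δ.atomEval Δ.progEval F := by
      classical
      refine sem_step Δ F
        ((fvSyn_finite' Δ F).diff (t := fvSemFml Δ.val Δ.atomEval Δ.progEval F)).toFinset
        (fun v hv => ((Set.Finite.mem_toFinset _).mp hv).2) μ ω ?_
      intro v hv
      rw [Set.Finite.mem_toFinset] at hv
      by_cases hsyn : v ∈ fvSyn Δ.fvA Δ.fvP F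
      · have hsem : v ∈ fvSemFml Δ.val Δ.atomEval Δ.progEval F := by
          by_contra hc; exact hv ⟨hsyn, hc⟩
        rw [h v hsem]; exact (hω1 v hsyn).symm
      · exact (hω2 v hsyn).symm
    have hend : ω ∈ Formula.sem Δ.val Δ.atomEval Δ.progEval F ↔
        μ' ∈ Formula.sem Δ.val Δ.atomEval Δ.progEval F := by
      constructor
      · exact syn_coincidence Δ F _ (fun v hv => hv) ω μ' hω1
      · exact syn_coincidence Δ F _ (fun v hv => hv) μ' ω
          (fun v hv => (hω1 v hv).symm)
    exact hstep.trans hend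
  · intro X hX v hv
    by_contra hvX
    obtain ⟨μ, μ', hagree, hμ, hμ'⟩ := hv
    exact hμ' ((hX μ μ' (fun w hw => hagree w (fun hwv => hvX (hwv ▸ hw)))).mp hμ)
end

section
/- Coincidence lemma for programs with minimality: for any dynamic theory Δ, any program p ∈ P and states μ, ν, μ̃ ∈ S such that μ and ν differ only on a finite set of variables, if μ =_W ν for some W ⊇ FV^sem(p) and (μ,μ̃) ∈ 𝒫(p), then there exists ν̃ ∈ S with (ν,ν̃) ∈ 𝒫(p) and μ̃ =_W ν̃; moreover FV^sem(p) is the smallest set with this property, i.e. if X ⊆ V is any set such that the above holds for every W ⊇ X, then FV^sem(p) ⊆ X. -/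
/-- Key induction: if `μ` and `ν` agree outside a finite set `D` of semantically
non-free variables of `p`, then transitions of `p` from `μ` can be matched from `ν`
up to the complement of `D`. -/
lemma program_coincidence_key
    {V A P S U : Type*} (Δ : DynamicTheory V A P S U) (p : P) (D : Finset V) :
    ∀ μ ν μ' : S,
      (∀ v : V, v ∉ D → Δ.val μ v = Δ.val ν v) →
      (∀ v ∈ D, v ∉ fvSemProg Δ.val Δ.progEval p) →
      (μ, μ') ∈ Δ.progEval p →
      ∃ ν' : S, (ν, ν') ∈ Δ.progEval p ∧ ∀ v ∉ D, Δ.val μ' v = Δ.val ν' v := by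
  classical
  induction D using Finset.induction_on with
  | empty =>
    intro μ ν μ' hag _ hμ
    exact ⟨μ', (Δ.progEval_ext p μ ν μ' (fun v => hag v (by simp))).mp hμ,
      fun v _ => rfl⟩
  | @insert a D' ha ih =>
    intro μ ν μ' hag hfv hμ
    obtain ⟨ω, hω1, hω2⟩ := Δ.interpolation ν μ ({a} : Set V)
    have ha' := hfv a (Finset.mem_insert_self a D')
    simp only [fvSemProg, Set.mem_setOf_eq, not_exists] at ha'
    push_neg at ha'
    obtain ⟨ω', hω'agree, hω'mem⟩ :=
      ha' μ ω μ' (fun w hw => (hω2 w (by simpa using hw)).symm) hμ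
    have hωag : ∀ v : V, v ∉ D' → Δ.val ω v = Δ.val ν v := by
      intro v hv
      by_cases h : v = a
      · subst h; exact hω1 v rfl
      · rw [hω2 v (by simpa using h)]
        exact hag v (by simp [h, hv])
    obtain ⟨ν', hν'mem, hν'ag⟩ :=
      ih ω ν ω' hωag (fun v hv => hfv v (Finset.mem_insert_of_mem hv)) hω'mem
    refine ⟨ν', hν'mem, fun v hv => ?_⟩
    rw [Finset.mem_insert, not_or] at hv
    calc Δ.val μ' v = Δ.val ω' v := hω'agree v hv.1
      _ = Δ.val ν' v := hν'ag v hv.2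

/-- Coincidence lemma for programs with minimality: for states differing
only on finitely many variables and agreeing on a set `W ⊇ FV^sem(p)`, transitions of `p`
can be matched up to `W`; moreover `FV^sem(p)` is the smallest set with this property. -/
theorem program_coincidence_and_minimality
    {V A P S U : Type*} (Δ : DynamicTheory V A P S U) (p : P) :
    (∀ W : Set V, fvSemProg Δ.val Δ.progEval p ⊆ W →
      ∀ μ ν μ' : S, ({v : V | Δ.val μ v ≠ Δ.val ν v}).Finite →
        (∀ v ∈ W, Δ.val μ v = Δ.val ν v) → (μ, μ') ∈ Δ.progEval p →
        ∃ ν' : S, (ν, ν') ∈ Δ.progEval p ∧ ∀ v ∈ W, Δ.val μ' v = Δ.val ν' v) ∧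
    (∀ X : Set V,
      (∀ W : Set V, X ⊆ W →
        ∀ μ ν μ' : S, ({v : V | Δ.val μ v ≠ Δ.val ν v}).Finite →
          (∀ v ∈ W, Δ.val μ v = Δ.val ν v) → (μ, μ') ∈ Δ.progEval p →
          ∃ ν' : S, (ν, ν') ∈ Δ.progEval p ∧ ∀ v ∈ W, Δ.val μ' v = Δ.val ν' v) →
      fvSemProg Δ.val Δ.progEval p ⊆ X) := by
  constructor
  · intro W hW μ ν μ' hfin hWag hμ
    have hD : ∀ v : V, v ∉ hfin.toFinset → Δ.val μ v = Δ.val ν v := by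
      intro v hv
      by_contra h
      exact hv (hfin.mem_toFinset.mpr h)
    have hDfv : ∀ v ∈ hfin.toFinset, v ∉ fvSemProg Δ.val Δ.progEval p := by
      intro v hv hvfv
      exact (hfin.mem_toFinset.mp hv) (hWag v (hW hvfv))
    obtain ⟨ν', hν'mem, hν'ag⟩ := program_coincidence_key Δ p hfin.toFinset μ ν μ' hD hDfv hμ
    refine ⟨ν', hν'mem, fun v hv => ?_⟩
    exact hν'ag v (fun hvD => (hfin.mem_toFinset.mp hvD) (hWag v hv))
  · intro X hX v hv
    by_contra hvX
    obtain ⟨μ, μ', ν, hag, hμν, hnone⟩ := hv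
    obtain ⟨ν', hν'mem, hν'ag⟩ := hX {w : V | w ≠ v}
      (fun w hw h => hvX (h ▸ hw)) μ μ' ν
      (Set.Finite.subset (Set.finite_singleton v) (by
        intro w hw
        by_contra h
        exact hw (hag w (by simpa using h))))
      (fun w hw => hag w hw) hμν
    exact hnone ⟨ν', fun w hw => hν'ag w hw, hν'mem⟩
end

section
/- Soundness of the vacuity axiom V and Barcan axiom B: for any dynamic theory Δ, program p ∈ P, variable v ∈ V and Λ-formula φ: (V) if FV^sem(φ) ∩ BV^sem(p) = ∅ then the formula φ → [p]φ is Δ-valid; (B) if v ∉ FV^sem(p) ∪ BV^sem(p) then the formula (∀v [p]φ) ↔ ([p] ∀v φ) is Δ-valid. -/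
section AuxSound

variable {V A P S U : Type*} (Δ : DynamicTheory V A P S U)

lemma fvSyn_finite_aux (φ : Formula V A P) : (fvSyn Δ.fvA Δ.fvP φ).Finite := by
  induction φ with
  | atom a => exact Δ.fvA_finite a
  | not F ih => exact ih
  | and F G ihF ihG => exact ihF.union ihG
  | all w F ih => exact ih.diff
  | box q F ih => exact (Δ.fvP_finite q).union ih

lemma coincidence_aux (φ : Formula V A P) :
    ∀ μ ν : S, (∀ w ∈ fvSyn Δ.fvA Δ.fvP φ, Δ.val μ w = Δ.val ν w) →
    μ ∈ Formula.sem Δ.val Δ.atomEval Δ.progEval φ →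
    ν ∈ Formula.sem Δ.val Δ.atomEval Δ.progEval φ := by
  induction φ with
  | atom a =>
    intro μ ν h hμ
    exact (Δ.fvA_overapprox a μ ν h).mp hμ
  | not F ih =>
    intro μ ν h hμ hν
    exact hμ (ih ν μ (fun w hw => (h w hw).symm) hν)
  | and F G ihF ihG =>
    intro μ ν h hμ
    exact ⟨ihF μ ν (fun w hw => h w (Or.inl hw)) hμ.1,
           ihG μ ν (fun w hw => h w (Or.inr hw)) hμ.2⟩
  | all u F ih =>
    intro μ ν h hμ ν' hν'
    obtain ⟨ω, hω1, hω2⟩ := Δ.interpolation ν' μ {u}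
    have hμω : ∀ w, w ≠ u → Δ.val μ w = Δ.val ω w := fun w hw =>
      (hω2 w hw).symm
    refine ih ω ν' (fun w hw => ?_) (hμ ω hμω)
    by_cases hwu : w = u
    · subst hwu; exact hω1 w rfl
    · calc Δ.val ω w = Δ.val μ w := hω2 w hwu
        _ = Δ.val ν w := h w ⟨hw, hwu⟩
        _ = Δ.val ν' w := hν' w hwu
  | box q F ih =>
    intro μ ν h hμ ω' hω'
    obtain ⟨ω, hω, heq⟩ := Δ.fvP_overapprox q (Δ.fvP q ∪ fvSyn Δ.fvA Δ.fvP F)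
      Set.subset_union_left ν μ ω' (fun w hw => (h w hw).symm) hω'
    exact ih ω ω' (fun w hw => (heq w (Or.inr hw)).symm) (hμ ω hω)

lemma change_nonfree_aux (φ : Formula V A P) {W : Set V} (hW : W.Finite) :
    ∀ μ μ' : S,
    (∀ w ∈ W, w ∉ fvSemFml Δ.val Δ.atomEval Δ.progEval φ) →
    (∀ w, w ∉ W → Δ.val μ w = Δ.val μ' w) →
    μ ∈ Formula.sem Δ.val Δ.atomEval Δ.progEval φ →
    μ' ∈ Formula.sem Δ.val Δ.atomEval Δ.progEval φ := by
  induction W, hW using Set.Finite.induction_on with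
  | empty =>
    intro μ μ' _ h hμ
    exact coincidence_aux Δ φ μ μ' (fun w _ => h w (by simp)) hμ
  | @insert a s ha hs ih =>
    intro μ μ' hfree h hμ
    obtain ⟨ω, hω1, hω2⟩ := Δ.interpolation μ μ' {a}
    have hωs : ω ∈ Formula.sem Δ.val Δ.atomEval Δ.progEval φ := by
      refine ih μ ω (fun w hw => hfree w (Set.mem_insert_of_mem a hw)) ?_ hμ
      intro w hw
      by_cases hwa : w = a
      · subst hwa; exact (hω1 w rfl).symm
      · have : w ∉ insert a s := by simp [hwa, hw]
        exact (h w this).trans (hω2 w hwa).symm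
    by_contra hμ'
    exact hfree a (Set.mem_insert a s)
      ⟨ω, μ', fun w hw => hω2 w hw, hωs, hμ'⟩

end AuxSound

/-- Soundness of the vacuity axiom (V) and the Barcan axiom (B):
if `FV^sem(φ) ∩ BV^sem(p) = ∅` then `φ → [p]φ` is valid, and if
`v ∉ FV^sem(p) ∪ BV^sem(p)` then `(∀v [p]φ) ↔ ([p]∀v φ)` is valid. -/
theorem axiom_V_and_B_sound
    {V A P S U : Type*} (Δ : DynamicTheory V A P S U) (p : P) (v : V)
    (φ : Formula V A P) :
    (fvSemFml Δ.val Δ.atomEval Δ.progEval φ ∩ bvSemProg Δ.val Δ.progEval p = ∅ →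
      Valid Δ.val Δ.atomEval Δ.progEval (Formula.imp φ (Formula.box p φ))) ∧
    (v ∉ fvSemProg Δ.val Δ.progEval p ∪ bvSemProg Δ.val Δ.progEval p →
      Valid Δ.val Δ.atomEval Δ.progEval
        (Formula.iff (Formula.all v (Formula.box p φ))
          (Formula.box p (Formula.all v φ)))) := by
  constructor
  · -- Axiom V
    intro hdisj
    rw [Valid, Set.eq_univ_iff_forall]
    intro μ
    simp only [Formula.imp, Formula.sem, Set.mem_compl_iff, Set.mem_inter_iff, not_and,
      not_not, Set.mem_setOf_eq]
    intro hφ ν hν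
    set W : Set V := fvSyn Δ.fvA Δ.fvP φ ∩ {w | Δ.val μ w ≠ Δ.val ν w} with hWdef
    have hWfin : W.Finite := (fvSyn_finite_aux Δ φ).subset Set.inter_subset_left
    obtain ⟨ω, hω1, hω2⟩ := Δ.interpolation ν μ W
    have hωsem : ω ∈ Formula.sem Δ.val Δ.atomEval Δ.progEval φ := by
      refine change_nonfree_aux Δ φ hWfin μ ω ?_ (fun w hw => (hω2 w hw).symm) hφ
      intro w hw hfv
      have hbv : w ∈ bvSemProg Δ.val Δ.progEval p := ⟨μ, ν, hν, hw.2⟩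
      exact absurd (Set.mem_inter hfv hbv) (by rw [hdisj]; exact Set.notMem_empty w)
    refine coincidence_aux Δ φ ω ν (fun w hw => ?_) hωsem
    by_cases hwW : w ∈ W
    · exact hω1 w hwW
    · have : Δ.val μ w = Δ.val ν w := by
        by_contra hne
        exact hwW ⟨hw, hne⟩
      exact (hω2 w hwW).trans this
  · -- Axiom B
    intro hv
    have hvf : v ∉ fvSemProg Δ.val Δ.progEval p := fun h => hv (Or.inl h)
    have hvb : v ∉ bvSemProg Δ.val Δ.progEval p := fun h => hv (Or.inr h)
    rw [Valid, Set.eq_univ_iff_forall]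
    intro μ
    simp only [Formula.iff, Formula.imp, Formula.sem, Set.mem_inter_iff, Set.mem_compl_iff,
      not_and, not_not, Set.mem_setOf_eq]
    constructor
    · -- ∀v[p]φ → [p]∀vφ
      intro hμ ν hν ν' hν'
      obtain ⟨μ', hμ'1, hμ'2⟩ := Δ.interpolation ν' μ {v}
      have hμμ' : ∀ w, w ≠ v → Δ.val μ w = Δ.val μ' w := fun w hw => (hμ'2 w hw).symm
      have hex : ∃ ν'' : S, (∀ w, w ≠ v → Δ.val ν w = Δ.val ν'' w) ∧
          (μ', ν'') ∈ Δ.progEval p := by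
        by_contra hc
        exact hvf ⟨μ, μ', ν, hμμ', hν, hc⟩
      obtain ⟨ν'', hνν'', hP''⟩ := hex
      have hveq : Δ.val μ' v = Δ.val ν'' v := by
        by_contra hne
        exact hvb ⟨μ', ν'', hP'', hne⟩
      have hall : ∀ w : V, Δ.val ν'' w = Δ.val ν' w := by
        intro w
        by_cases hwv : w = v
        · subst hwv; exact hveq.symm.trans (hμ'1 w rfl)
        · exact (hνν'' w hwv).symm.trans (hν' w hwv)
      exact coincidence_aux Δ φ ν'' ν' (fun w _ => hall w) (hμ μ' hμμ' ν'' hP'')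
    · -- [p]∀vφ → ∀v[p]φ
      intro hμ μ' hμμ' ν' hν'
      have hex : ∃ ν : S, (∀ w, w ≠ v → Δ.val ν' w = Δ.val ν w) ∧
          (μ, ν) ∈ Δ.progEval p := by
        by_contra hc
        exact hvf ⟨μ', μ, ν', fun w hw => (hμμ' w hw).symm, hν', hc⟩
      obtain ⟨ν, hν'ν, hP⟩ := hex
      exact hμ ν hP ν' (fun w hw => (hν'ν w hw).symm)
end

section
/- Havoc lifting yields a dynamic theory: for any dynamic theory Δ, the havoc lift Δ^{:=*} is again a dynamic theory; in particular, the extended program evaluation 𝒫^{:=*} together with FV_P^{:=*} satisfies all program-evaluation requirements: every FV_P^{:=*}(p) is finite, every 𝒫^{:=*}(p) is extensional, and for every program p of Δ^{:=*} and every W ⊇ FV_P^{:=*}(p), if μ =_W ν and (μ,ω) ∈ 𝒫^{:=*}(p) then some ω̃ has (ν,ω̃) ∈ 𝒫^{:=*}(p) with ω =_W ω̃. -/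
/-- The havoc lift of a dynamic theory is again a dynamic theory: the
lifted program evaluation and free-variable map satisfy finiteness, extensionality and the
overapproximation property, and hence assemble (with all other components unchanged) into
a dynamic theory. -/
theorem havoc_lift_is_dynamic_theory
    {V A P S U : Type*} (Δ : DynamicTheory V A P S U) :
    (∀ p : P ⊕ V, (havocFvP Δ.fvP p).Finite) ∧
    (∀ (p : P ⊕ V) (μ ν ω : S), (∀ v : V, Δ.val μ v = Δ.val ν v) →
      ((μ, ω) ∈ havocProgEval Δ.val Δ.progEval p ↔
        (ν, ω) ∈ havocProgEval Δ.val Δ.progEval p)) ∧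
    (∀ (p : P ⊕ V) (W : Set V), havocFvP Δ.fvP p ⊆ W →
      ∀ μ ν ω : S, (∀ v ∈ W, Δ.val μ v = Δ.val ν v) →
        (μ, ω) ∈ havocProgEval Δ.val Δ.progEval p →
        ∃ ω' : S, (ν, ω') ∈ havocProgEval Δ.val Δ.progEval p ∧
          ∀ v ∈ W, Δ.val ω v = Δ.val ω' v) ∧
    ∃ Δ' : DynamicTheory V A (P ⊕ V) S U,
      Δ'.val = Δ.val ∧ Δ'.atomEval = Δ.atomEval ∧ Δ'.fvA = Δ.fvA ∧
      Δ'.progEval = havocProgEval Δ.val Δ.progEval ∧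
      Δ'.fvP = havocFvP Δ.fvP := by
  have hfin : ∀ p : P ⊕ V, (havocFvP Δ.fvP p).Finite := by
    rintro (p | v)
    · exact Δ.fvP_finite p
    · exact Set.finite_empty
  have hext : ∀ (p : P ⊕ V) (μ ν ω : S), (∀ v : V, Δ.val μ v = Δ.val ν v) →
      ((μ, ω) ∈ havocProgEval Δ.val Δ.progEval p ↔
        (ν, ω) ∈ havocProgEval Δ.val Δ.progEval p) := by
    rintro (p | v) μ ν ω h
    · exact Δ.progEval_ext p μ ν ω h
    · constructor
      · intro hm w hw; rw [← h w]; exact hm w hw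
      · intro hm w hw; rw [h w]; exact hm w hw
  have hover : ∀ (p : P ⊕ V) (W : Set V), havocFvP Δ.fvP p ⊆ W →
      ∀ μ ν ω : S, (∀ v ∈ W, Δ.val μ v = Δ.val ν v) →
        (μ, ω) ∈ havocProgEval Δ.val Δ.progEval p →
        ∃ ω' : S, (ν, ω') ∈ havocProgEval Δ.val Δ.progEval p ∧
          ∀ v ∈ W, Δ.val ω v = Δ.val ω' v := by
    rintro (p | v) W hW μ ν ω hμν hmem
    · exact Δ.fvP_overapprox p W hW μ ν ω hμν hmem
    · obtain ⟨ω', h1, h2⟩ := Δ.interpolation ω ν {v}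
      refine ⟨ω', ?_, ?_⟩
      · intro w hw
        rw [h2 w hw]
      · intro w hw
        by_cases hwv : w = v
        · subst hwv; exact (h1 w rfl).symm
        · rw [h2 w hwv, ← hμν w hw]
          exact (hmem w hwv).symm
  refine ⟨hfin, hext, hover, ⟨{
    state_nonempty := Δ.state_nonempty
    univ_nonempty := Δ.univ_nonempty
    val := Δ.val
    interpolation := Δ.interpolation
    atomEval := Δ.atomEval
    fvA := Δ.fvA
    fvA_finite := Δ.fvA_finite
    fvA_overapprox := Δ.fvA_overapprox
    progEval := havocProgEval Δ.val Δ.progEval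
    fvP := havocFvP Δ.fvP
    fvP_finite := hfin
    progEval_ext := hext
    fvP_overapprox := hover }, rfl, rfl, rfl, rfl, rfl⟩⟩
end

section
/- Soundness of the havoc axiom: for any dynamic theory Δ, any variable v ∈ V and any formula φ of the havoc lift Δ^{:=*}, the formula ([v := *]φ) ↔ (∀v φ) is Δ^{:=*}-valid. -/
/-- Soundness of the havoc axiom: `([v := *]φ) ↔ (∀v φ)` is valid in the
havoc lift `Δ^{:=*}`. -/
theorem havoc_axiom_sound
    {V A P S U : Type*} (Δ : DynamicTheory V A P S U) (v : V)
    (φ : Formula V A (P ⊕ V)) :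
    Valid Δ.val Δ.atomEval (havocProgEval Δ.val Δ.progEval)
      (Formula.iff (Formula.box (Sum.inr v) φ) (Formula.all v φ)) := by
  unfold Valid
  ext μ
  simp only [Formula.iff, Formula.imp, Formula.not, Formula.sem, Set.mem_univ, iff_true,
    Set.mem_inter_iff, Set.mem_compl_iff, Set.mem_setOf_eq, not_not, not_and]
  constructor <;> intro h <;> simp_all [havocProgEval]
end

section
/- Regular closure yields a dynamic theory: for any dynamic theory Δ, the regular closure Δ^reg is again a dynamic theory; in particular, the lifted program evaluation 𝒫^reg together with FV_P^reg satisfies the program-evaluation requirements for every program p ∈ P^reg: FV_P^reg(p) is finite, 𝒫^reg(p) is extensional, and for every W ⊇ FV_P^reg(p), if μ =_W ν and (μ,ω) ∈ 𝒫^reg(p) then some ω̃ has (ν,ω̃) ∈ 𝒫^reg(p) with ω =_W ω̃. -/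
section Aux

variable {V A P S U : Type*}

lemma fvSyn_finite (fvA : A → Set V) (hA : ∀ a, (fvA a).Finite)
    (F : Formula V A Empty) : (fvSyn fvA (fun e => e.elim) F).Finite := by
  induction F with
  | atom a => exact hA a
  | not F ih => exact ih
  | and F G ihF ihG => exact ihF.union ihG
  | all v F ih => exact ih.diff
  | box p F ih => exact p.elim

lemma foSem_coincidence (val : S → V → U) (aEval : A → Set S) (fvA : A → Set V)
    (hA : ∀ (a : A) (μ ν : S), (∀ v ∈ fvA a, val μ v = val ν v) →
      (μ ∈ aEval a ↔ ν ∈ aEval a))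
    (hinterp : ∀ (μ ν : S) (W : Set V), ∃ ω : S,
      (∀ v ∈ W, val ω v = val μ v) ∧ (∀ v ∉ W, val ω v = val ν v))
    (F : Formula V A Empty) : ∀ (μ ν : S),
    (∀ v ∈ fvSyn fvA (fun e => e.elim) F, val μ v = val ν v) →
    (μ ∈ foSem val aEval F ↔ ν ∈ foSem val aEval F) := by
  induction F with
  | atom a => exact fun μ ν h => hA a μ ν h
  | not F ih =>
    intro μ ν h
    simp only [foSem, Formula.sem, Set.mem_compl_iff] at *
    exact not_congr (ih μ ν h)
  | and F G ihF ihG =>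
    intro μ ν h
    simp only [foSem, Formula.sem, Set.mem_inter_iff] at *
    simp only [fvSyn, Set.mem_union] at h
    exact and_congr (ihF μ ν fun v hv => h v (Or.inl hv)) (ihG μ ν fun v hv => h v (Or.inr hv))
  | all v F ih =>
    have key : ∀ μ ν : S,
        (∀ v' ∈ fvSyn fvA (fun e => e.elim) (Formula.all v F), val μ v' = val ν v') →
        μ ∈ foSem val aEval (Formula.all v F) → ν ∈ foSem val aEval (Formula.all v F) := by
      intro μ ν h hμ ω hω
      obtain ⟨ω', h1, h2⟩ := hinterp ω μ {v}
      have hωμ : ∀ w : V, w ≠ v → val μ w = val ω' w := by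
        intro w hw
        exact (h2 w hw).symm
      have hF : ω' ∈ foSem val aEval F := hμ ω' hωμ
      refine (ih ω' ω ?_).mp hF
      intro w hw
      by_cases hwv : w = v
      · subst hwv; exact h1 w rfl
      · calc val ω' w = val μ w := h2 w hwv
          _ = val ν w := h w (by simp [fvSyn, hw, hwv])
          _ = val ω w := hω w hwv
    exact fun μ ν h => ⟨key μ ν h, key ν μ fun v' hv' => (h v' hv').symm⟩
  | box p F ih => exact p.elim

variable (val : S → V → U)

lemma relIter_ext (R : Set (S × S))
    (hR : ∀ μ ν ω : S, (∀ v, val μ v = val ν v) → ((μ, ω) ∈ R ↔ (ν, ω) ∈ R)) :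
    ∀ (n : ℕ) (μ ν ω : S), (∀ v, val μ v = val ν v) →
      ((μ, ω) ∈ relIter val R n ↔ (ν, ω) ∈ relIter val R n) := by
  intro n
  induction n with
  | zero =>
    intro μ ν ω h
    simp only [relIter, Set.mem_setOf_eq]
    exact forall_congr' fun v => by rw [h v]
  | succ n ih =>
    intro μ ν ω h
    simp only [relIter, relComp, Set.mem_setOf_eq]
    exact exists_congr fun κ => and_congr_left fun _ => hR μ ν κ h

lemma relIter_overapprox (W : Set V) (R : Set (S × S))
    (hR : ∀ μ ν ω : S, (∀ v ∈ W, val μ v = val ν v) → (μ, ω) ∈ R →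
      ∃ ω', (ν, ω') ∈ R ∧ ∀ v ∈ W, val ω v = val ω' v) :
    ∀ (n : ℕ) (μ ν ω : S), (∀ v ∈ W, val μ v = val ν v) → (μ, ω) ∈ relIter val R n →
      ∃ ω', (ν, ω') ∈ relIter val R n ∧ ∀ v ∈ W, val ω v = val ω' v := by
  intro n
  induction n with
  | zero =>
    intro μ ν ω h hμ
    simp only [relIter, Set.mem_setOf_eq] at hμ ⊢
    exact ⟨ν, fun v => rfl, fun v hv => (hμ v).symm.trans (h v hv)⟩
  | succ n ih =>
    intro μ ν ω h hμ
    obtain ⟨κ, hκ1, hκ2⟩ := hμ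
    obtain ⟨κ', hκ'1, hκ'2⟩ := hR μ ν κ h hκ1
    obtain ⟨ω', hω'1, hω'2⟩ := ih κ κ' ω hκ'2 hκ2
    exact ⟨ω', ⟨κ', hκ'1, hω'1⟩, hω'2⟩

end Aux
/-- The regular closure of a dynamic theory is again a dynamic theory:
the lifted program evaluation and free-variable map satisfy finiteness, extensionality
and the overapproximation property, and hence assemble (with all other components
unchanged) into a dynamic theory. -/
theorem regular_closure_is_dynamic_theory
    {V A P S U : Type*} (Δ : DynamicTheory V A P S U) :
    (∀ p : RegProg V A P, (regFvP Δ.fvA Δ.fvP p).Finite) ∧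
    (∀ (p : RegProg V A P) (μ ν ω : S), (∀ v : V, Δ.val μ v = Δ.val ν v) →
      ((μ, ω) ∈ regProgEval Δ.val Δ.atomEval Δ.progEval p ↔
        (ν, ω) ∈ regProgEval Δ.val Δ.atomEval Δ.progEval p)) ∧
    (∀ (p : RegProg V A P) (W : Set V), regFvP Δ.fvA Δ.fvP p ⊆ W →
      ∀ μ ν ω : S, (∀ v ∈ W, Δ.val μ v = Δ.val ν v) →
        (μ, ω) ∈ regProgEval Δ.val Δ.atomEval Δ.progEval p →
        ∃ ω' : S, (ν, ω') ∈ regProgEval Δ.val Δ.atomEval Δ.progEval p ∧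
          ∀ v ∈ W, Δ.val ω v = Δ.val ω' v) ∧
    ∃ Δ' : DynamicTheory V A (RegProg V A P) S U,
      Δ'.val = Δ.val ∧ Δ'.atomEval = Δ.atomEval ∧ Δ'.fvA = Δ.fvA ∧
      Δ'.progEval = regProgEval Δ.val Δ.atomEval Δ.progEval ∧
      Δ'.fvP = regFvP Δ.fvA Δ.fvP := by
  have hfin : ∀ p : RegProg V A P, (regFvP Δ.fvA Δ.fvP p).Finite := by
    intro p
    induction p with
    | base r => exact Δ.fvP_finite r
    | seq p q ihp ihq => exact ihp.union ihq
    | choice p q ihp ihq => exact ihp.union ihq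
    | test F => exact fvSyn_finite Δ.fvA Δ.fvA_finite F
    | star p ih => exact ih
  have hext : ∀ (p : RegProg V A P) (μ ν ω : S), (∀ v : V, Δ.val μ v = Δ.val ν v) →
      ((μ, ω) ∈ regProgEval Δ.val Δ.atomEval Δ.progEval p ↔
        (ν, ω) ∈ regProgEval Δ.val Δ.atomEval Δ.progEval p) := by
    intro p
    induction p with
    | base r => exact Δ.progEval_ext r
    | seq p q ihp ihq =>
      intro μ ν ω h
      simp only [regProgEval, relComp, Set.mem_setOf_eq]
      exact exists_congr fun κ => and_congr_left fun _ => ihp μ ν κ h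
    | choice p q ihp ihq =>
      intro μ ν ω h
      simp only [regProgEval, Set.mem_union]
      exact or_congr (ihp μ ν ω h) (ihq μ ν ω h)
    | test F =>
      intro μ ν ω h
      simp only [regProgEval, Set.mem_setOf_eq]
      exact and_congr
        (foSem_coincidence Δ.val Δ.atomEval Δ.fvA Δ.fvA_overapprox Δ.interpolation F μ ν
          (fun v _ => h v))
        (forall_congr' fun v => by rw [h v])
    | star p ih =>
      intro μ ν ω h
      simp only [regProgEval, Set.mem_iUnion]
      exact exists_congr fun n => relIter_ext Δ.val _ ih n μ ν ω h
  have hover : ∀ (p : RegProg V A P) (W : Set V), regFvP Δ.fvA Δ.fvP p ⊆ W →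
      ∀ μ ν ω : S, (∀ v ∈ W, Δ.val μ v = Δ.val ν v) →
        (μ, ω) ∈ regProgEval Δ.val Δ.atomEval Δ.progEval p →
        ∃ ω' : S, (ν, ω') ∈ regProgEval Δ.val Δ.atomEval Δ.progEval p ∧
          ∀ v ∈ W, Δ.val ω v = Δ.val ω' v := by
    intro p
    induction p with
    | base r => exact Δ.fvP_overapprox r
    | seq p q ihp ihq =>
      intro W hW μ ν ω h hμ
      simp only [regFvP, Set.union_subset_iff] at hW
      obtain ⟨κ, hκ1, hκ2⟩ := hμ
      obtain ⟨κ', h1, h2⟩ := ihp W hW.1 μ ν κ h hκ1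
      obtain ⟨ω', h3, h4⟩ := ihq W hW.2 κ κ' ω h2 hκ2
      exact ⟨ω', ⟨κ', h1, h3⟩, h4⟩
    | choice p q ihp ihq =>
      intro W hW μ ν ω h hμ
      simp only [regFvP, Set.union_subset_iff] at hW
      rcases hμ with hμ | hμ
      · obtain ⟨ω', h1, h2⟩ := ihp W hW.1 μ ν ω h hμ
        exact ⟨ω', Or.inl h1, h2⟩
      · obtain ⟨ω', h1, h2⟩ := ihq W hW.2 μ ν ω h hμ
        exact ⟨ω', Or.inr h1, h2⟩
    | test F =>
      intro W hW μ ν ω h hμ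
      obtain ⟨hF, heq⟩ := hμ
      refine ⟨ν, ⟨?_, fun v => rfl⟩, fun v hv => (heq v).symm.trans (h v hv)⟩
      exact (foSem_coincidence Δ.val Δ.atomEval Δ.fvA Δ.fvA_overapprox Δ.interpolation F μ ν
        (fun v hv => h v (hW hv))).mp hF
    | star p ih =>
      intro W hW μ ν ω h hμ
      simp only [regProgEval, Set.mem_iUnion] at hμ ⊢
      obtain ⟨n, hn⟩ := hμ
      obtain ⟨ω', h1, h2⟩ := relIter_overapprox Δ.val W _ (ih W hW) n μ ν ω h hn
      exact ⟨ω', ⟨n, h1⟩, h2⟩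
  exact ⟨hfin, hext, hover,
    ⟨{ state_nonempty := Δ.state_nonempty, univ_nonempty := Δ.univ_nonempty,
       val := Δ.val, interpolation := Δ.interpolation, atomEval := Δ.atomEval,
       fvA := Δ.fvA, fvA_finite := Δ.fvA_finite, fvA_overapprox := Δ.fvA_overapprox,
       progEval := regProgEval Δ.val Δ.atomEval Δ.progEval,
       fvP := regFvP Δ.fvA Δ.fvP, fvP_finite := hfin,
       progEval_ext := hext, fvP_overapprox := hover }, rfl, rfl, rfl, rfl, rfl⟩⟩
end

section
/- Simple heterogeneous combination yields a dynamic theory: given two dynamic theories Δ⁰, Δ¹ over disjoint signatures and a set of heterogeneous atoms A^c with evaluation 𝒜^c and finite free-variable overapproximation FV_A^c satisfying the atom-evaluation requirements over the product state space, the simple heterogeneous structure Δ^⊎ is a dynamic theory: the product state space S⁰ × S¹ with 𝒱^het satisfies interpolation, the combined atom evaluation 𝒜^het with its free-variable map satisfies the atom requirements, and the combined program evaluation 𝒫^⊎ with its free-variable map satisfies the program requirements (finiteness, overapproximation, extensionality). -/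
/-- The simple heterogeneous combination of two dynamic theories (with
heterogeneous atoms satisfying the atom-evaluation requirements over the product state
space) is again a dynamic theory: the product state space satisfies interpolation, the
combined atom evaluation satisfies the atom requirements, the combined program evaluation
satisfies the program requirements, and all components assemble into a dynamic theory. -/
theorem simple_heterogeneous_is_dynamic_theory
    {V0 A0 P0 S0 U0 V1 A1 P1 S1 U1 Ac : Type*}
    (Δ0 : DynamicTheory V0 A0 P0 S0 U0) (Δ1 : DynamicTheory V1 A1 P1 S1 U1)
    (aEvalC : Ac → Set (S0 × S1)) (fvAC : Ac → Set (V0 ⊕ V1))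
    (hCfin : ∀ a : Ac, (fvAC a).Finite)
    (hCover : ∀ (a : Ac) (μ ν : S0 × S1),
      (∀ v ∈ fvAC a, hetVal Δ0.val Δ1.val μ v = hetVal Δ0.val Δ1.val ν v) →
      (μ ∈ aEvalC a ↔ ν ∈ aEvalC a)) :
    (∀ (μ ν : S0 × S1) (W : Set (V0 ⊕ V1)), ∃ ω : S0 × S1,
      (∀ v ∈ W, hetVal Δ0.val Δ1.val ω v = hetVal Δ0.val Δ1.val μ v) ∧
      (∀ v ∉ W, hetVal Δ0.val Δ1.val ω v = hetVal Δ0.val Δ1.val ν v)) ∧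
    (∀ a : A0 ⊕ A1 ⊕ Ac, (hetFvA Δ0.fvA Δ1.fvA fvAC a).Finite) ∧
    (∀ (a : A0 ⊕ A1 ⊕ Ac) (μ ν : S0 × S1),
      (∀ v ∈ hetFvA Δ0.fvA Δ1.fvA fvAC a,
        hetVal Δ0.val Δ1.val μ v = hetVal Δ0.val Δ1.val ν v) →
      (μ ∈ hetAtomEval Δ0.atomEval Δ1.atomEval aEvalC a ↔
        ν ∈ hetAtomEval Δ0.atomEval Δ1.atomEval aEvalC a)) ∧
    (∀ p : P0 ⊕ P1, (hetFvP Δ0.fvP Δ1.fvP p).Finite) ∧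
    (∀ (p : P0 ⊕ P1) (μ ν ω : S0 × S1),
      (∀ v : V0 ⊕ V1, hetVal Δ0.val Δ1.val μ v = hetVal Δ0.val Δ1.val ν v) →
      ((μ, ω) ∈ hetProgEval Δ0.val Δ1.val Δ0.progEval Δ1.progEval p ↔
        (ν, ω) ∈ hetProgEval Δ0.val Δ1.val Δ0.progEval Δ1.progEval p)) ∧
    (∀ (p : P0 ⊕ P1) (W : Set (V0 ⊕ V1)), hetFvP Δ0.fvP Δ1.fvP p ⊆ W →
      ∀ μ ν ω : S0 × S1,
        (∀ v ∈ W, hetVal Δ0.val Δ1.val μ v = hetVal Δ0.val Δ1.val ν v) →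
        (μ, ω) ∈ hetProgEval Δ0.val Δ1.val Δ0.progEval Δ1.progEval p →
        ∃ ω' : S0 × S1,
          (ν, ω') ∈ hetProgEval Δ0.val Δ1.val Δ0.progEval Δ1.progEval p ∧
          ∀ v ∈ W, hetVal Δ0.val Δ1.val ω v = hetVal Δ0.val Δ1.val ω' v) ∧
    ∃ Δh : DynamicTheory (V0 ⊕ V1) (A0 ⊕ A1 ⊕ Ac) (P0 ⊕ P1) (S0 × S1) (U0 ⊕ U1),
      Δh.val = hetVal Δ0.val Δ1.val ∧
      Δh.atomEval = hetAtomEval Δ0.atomEval Δ1.atomEval aEvalC ∧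
      Δh.fvA = hetFvA Δ0.fvA Δ1.fvA fvAC ∧
      Δh.progEval = hetProgEval Δ0.val Δ1.val Δ0.progEval Δ1.progEval ∧
      Δh.fvP = hetFvP Δ0.fvP Δ1.fvP := by
  have hinterp : ∀ (μ ν : S0 × S1) (W : Set (V0 ⊕ V1)), ∃ ω : S0 × S1,
      (∀ v ∈ W, hetVal Δ0.val Δ1.val ω v = hetVal Δ0.val Δ1.val μ v) ∧
      (∀ v ∉ W, hetVal Δ0.val Δ1.val ω v = hetVal Δ0.val Δ1.val ν v) := by
    intro μ ν W
    obtain ⟨ω0, h0W, h0nW⟩ := Δ0.interpolation μ.1 ν.1 {v | Sum.inl v ∈ W}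
    obtain ⟨ω1, h1W, h1nW⟩ := Δ1.interpolation μ.2 ν.2 {v | Sum.inr v ∈ W}
    refine ⟨(ω0, ω1), ?_, ?_⟩ <;> rintro (v | v) hv <;>
      simp only [hetVal, Sum.inl.injEq, Sum.inr.injEq]
    · exact h0W v hv
    · exact h1W v hv
    · exact h0nW v hv
    · exact h1nW v hv
  have hfvA : ∀ a : A0 ⊕ A1 ⊕ Ac, (hetFvA Δ0.fvA Δ1.fvA fvAC a).Finite := by
    rintro (a | a | a)
    · exact (Δ0.fvA_finite a).image _
    · exact (Δ1.fvA_finite a).image _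
    · exact hCfin a
  have hAover : ∀ (a : A0 ⊕ A1 ⊕ Ac) (μ ν : S0 × S1),
      (∀ v ∈ hetFvA Δ0.fvA Δ1.fvA fvAC a,
        hetVal Δ0.val Δ1.val μ v = hetVal Δ0.val Δ1.val ν v) →
      (μ ∈ hetAtomEval Δ0.atomEval Δ1.atomEval aEvalC a ↔
        ν ∈ hetAtomEval Δ0.atomEval Δ1.atomEval aEvalC a) := by
    rintro (a | a | a) μ ν h
    · refine Δ0.fvA_overapprox a μ.1 ν.1 fun v hv => ?_
      have := h (Sum.inl v) ⟨v, hv, rfl⟩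
      simpa [hetVal] using this
    · refine Δ1.fvA_overapprox a μ.2 ν.2 fun v hv => ?_
      have := h (Sum.inr v) ⟨v, hv, rfl⟩
      simpa [hetVal] using this
    · exact hCover a μ ν h
  have hfvP : ∀ p : P0 ⊕ P1, (hetFvP Δ0.fvP Δ1.fvP p).Finite := by
    rintro (p | p)
    · exact (Δ0.fvP_finite p).image _
    · exact (Δ1.fvP_finite p).image _
  have hPext : ∀ (p : P0 ⊕ P1) (μ ν ω : S0 × S1),
      (∀ v : V0 ⊕ V1, hetVal Δ0.val Δ1.val μ v = hetVal Δ0.val Δ1.val ν v) →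
      ((μ, ω) ∈ hetProgEval Δ0.val Δ1.val Δ0.progEval Δ1.progEval p ↔
        (ν, ω) ∈ hetProgEval Δ0.val Δ1.val Δ0.progEval Δ1.progEval p) := by
    rintro (p | p) μ ν ω h
    · have h0 : ∀ v : V0, Δ0.val μ.1 v = Δ0.val ν.1 v := fun v => by
        simpa [hetVal] using h (Sum.inl v)
      have h1 : ∀ v : V1, Δ1.val μ.2 v = Δ1.val ν.2 v := fun v => by
        simpa [hetVal] using h (Sum.inr v)
      constructor <;> rintro ⟨hp, hq⟩
      · exact ⟨(Δ0.progEval_ext p μ.1 ν.1 ω.1 h0).1 hp,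
          fun v => (h1 v).symm.trans (hq v)⟩
      · exact ⟨(Δ0.progEval_ext p μ.1 ν.1 ω.1 h0).2 hp,
          fun v => (h1 v).trans (hq v)⟩
    · have h0 : ∀ v : V0, Δ0.val μ.1 v = Δ0.val ν.1 v := fun v => by
        simpa [hetVal] using h (Sum.inl v)
      have h1 : ∀ v : V1, Δ1.val μ.2 v = Δ1.val ν.2 v := fun v => by
        simpa [hetVal] using h (Sum.inr v)
      constructor <;> rintro ⟨hp, hq⟩
      · exact ⟨(Δ1.progEval_ext p μ.2 ν.2 ω.2 h1).1 hp,
          fun v => (h0 v).symm.trans (hq v)⟩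
      · exact ⟨(Δ1.progEval_ext p μ.2 ν.2 ω.2 h1).2 hp,
          fun v => (h0 v).trans (hq v)⟩
  have hPover : ∀ (p : P0 ⊕ P1) (W : Set (V0 ⊕ V1)), hetFvP Δ0.fvP Δ1.fvP p ⊆ W →
      ∀ μ ν ω : S0 × S1,
        (∀ v ∈ W, hetVal Δ0.val Δ1.val μ v = hetVal Δ0.val Δ1.val ν v) →
        (μ, ω) ∈ hetProgEval Δ0.val Δ1.val Δ0.progEval Δ1.progEval p →
        ∃ ω' : S0 × S1,
          (ν, ω') ∈ hetProgEval Δ0.val Δ1.val Δ0.progEval Δ1.progEval p ∧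
          ∀ v ∈ W, hetVal Δ0.val Δ1.val ω v = hetVal Δ0.val Δ1.val ω' v := by
    rintro (p | p) W hW μ ν ω hμν hpw
    · obtain ⟨hp, hq⟩ := hpw
      have hsub : Δ0.fvP p ⊆ {v | Sum.inl v ∈ W} := fun v hv => hW ⟨v, hv, rfl⟩
      have hagree : ∀ v ∈ {v | Sum.inl v ∈ W}, Δ0.val μ.1 v = Δ0.val ν.1 v := by
        intro v hv
        simpa [hetVal] using hμν (Sum.inl v) hv
      obtain ⟨ω0, hω0, hω0W⟩ := Δ0.fvP_overapprox p _ hsub μ.1 ν.1 ω.1 hagree hp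
      refine ⟨(ω0, ν.2), ⟨hω0, fun v => rfl⟩, ?_⟩
      rintro (v | v) hv
      · simpa [hetVal] using hω0W v hv
      · have h1 : Δ1.val μ.2 v = Δ1.val ν.2 v := by
          simpa [hetVal] using hμν (Sum.inr v) hv
        simp only [hetVal, Sum.inr.injEq]
        exact (hq v).symm.trans h1
    · obtain ⟨hp, hq⟩ := hpw
      have hsub : Δ1.fvP p ⊆ {v | Sum.inr v ∈ W} := fun v hv => hW ⟨v, hv, rfl⟩
      have hagree : ∀ v ∈ {v | Sum.inr v ∈ W}, Δ1.val μ.2 v = Δ1.val ν.2 v := by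
        intro v hv
        simpa [hetVal] using hμν (Sum.inr v) hv
      obtain ⟨ω1, hω1, hω1W⟩ := Δ1.fvP_overapprox p _ hsub μ.2 ν.2 ω.2 hagree hp
      refine ⟨(ν.1, ω1), ⟨hω1, fun v => rfl⟩, ?_⟩
      rintro (v | v) hv
      · have h0 : Δ0.val μ.1 v = Δ0.val ν.1 v := by
          simpa [hetVal] using hμν (Sum.inl v) hv
        simp only [hetVal, Sum.inl.injEq]
        exact (hq v).symm.trans h0
      · simpa [hetVal] using hω1W v hv
  refine ⟨hinterp, hfvA, hAover, hfvP, hPext, hPover,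
    ⟨{ state_nonempty := ⟨Δ0.state_nonempty.some, Δ1.state_nonempty.some⟩
       univ_nonempty := ⟨Sum.inl Δ0.univ_nonempty.some⟩
       val := hetVal Δ0.val Δ1.val
       interpolation := hinterp
       atomEval := hetAtomEval Δ0.atomEval Δ1.atomEval aEvalC
       fvA := hetFvA Δ0.fvA Δ1.fvA fvAC
       fvA_finite := hfvA
       fvA_overapprox := hAover
       progEval := hetProgEval Δ0.val Δ1.val Δ0.progEval Δ1.progEval
       fvP := hetFvP Δ0.fvP Δ1.fvP
       fvP_finite := hfvP
       progEval_ext := hPext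
       fvP_overapprox := hPover }, rfl, rfl, rfl, rfl, rfl⟩⟩
end

section
/- Heterogeneous reduction (HR0/HR1): let Δ^het be the fully heterogeneous dynamic theory over Δ⁰ and Δ¹ (the regular closure of the havoc lift of the simple heterogeneous theory Δ^⊎). For every Λ⁰-formula φ (a formula built only from atoms of A⁰, variables of V⁰ and programs of P⁰), if φ is Δ⁰-valid then φ, regarded as a formula of Δ^het, is Δ^het-valid; symmetrically, every Δ¹-valid Λ¹-formula is Δ^het-valid. -/
/-- Key simulation lemma: if a projection `π` relates the big theory to the small one
compatibly with the renamings, then the semantics of a mapped formula is the preimage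
of the semantics of the original formula. -/
theorem sem_map_proj {V A P S U V' A' P' S' U' : Type*}
    (val : S → V → U) (aE : A → Set S) (pE : P → Set (S × S))
    (val' : S' → V' → U') (aE' : A' → Set S') (pE' : P' → Set (S' × S'))
    (π : S' → S) (fv : V → V') (fa : A → A') (fp : P → P')
    (H1 : ∀ (a : A) (μ : S'), μ ∈ aE' (fa a) ↔ π μ ∈ aE a)
    (H2 : ∀ (v : V) (μ ν : S'), (∀ w : V', w ≠ fv v → val' μ w = val' ν w) →
      ∀ w : V, w ≠ v → val (π μ) w = val (π ν) w)
    (H2' : ∀ (v : V) (μ : S') (ν0 : S), (∀ w : V, w ≠ v → val (π μ) w = val ν0 w) →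
      ∃ ν : S', π ν = ν0 ∧ ∀ w : V', w ≠ fv v → val' μ w = val' ν w)
    (H3 : ∀ (p : P) (μ ν : S'), (μ, ν) ∈ pE' (fp p) → (π μ, π ν) ∈ pE p)
    (H3' : ∀ (p : P) (μ : S') (ν0 : S), (π μ, ν0) ∈ pE p →
      ∃ ν : S', π ν = ν0 ∧ (μ, ν) ∈ pE' (fp p)) :
    ∀ (φ : Formula V A P) (μ : S'),
      μ ∈ Formula.sem val' aE' pE' (Formula.map fv fa fp φ) ↔
        π μ ∈ Formula.sem val aE pE φ := by
  intro φ
  induction φ with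
  | atom a => intro μ; exact H1 a μ
  | not F ih => intro μ; simp [Formula.map, Formula.sem, ih]
  | and F G ihF ihG => intro μ; simp [Formula.map, Formula.sem, ihF, ihG]
  | all v F ih =>
      intro μ
      constructor
      · intro h ν0 hν0
        obtain ⟨ν, hπ, hagree⟩ := H2' v μ ν0 hν0
        have := h ν hagree
        rw [ih] at this
        rwa [hπ] at this
      · intro h ν hagree
        rw [ih]
        exact h (π ν) (H2 v μ ν hagree)
  | box p F ih =>
      intro μ
      constructor
      · intro h ν0 hν0
        obtain ⟨ν, hπ, hmem⟩ := H3' p μ ν0 hν0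
        have := h ν hmem
        rw [ih] at this
        rwa [hπ] at this
      · intro h ν hmem
        rw [ih]
        exact h (π ν) (H3 p μ ν hmem)

/-- Heterogeneous reduction (HR0/HR1): in the fully heterogeneous
dynamic theory (the regular closure of the havoc lift of the simple heterogeneous
combination), every `Δ⁰`-valid pure `Λ⁰`-formula is valid, and symmetrically every
`Δ¹`-valid pure `Λ¹`-formula is valid. -/
theorem heterogeneous_reduction
    {V0 A0 P0 S0 U0 V1 A1 P1 S1 U1 Ac : Type*}
    (Δ0 : DynamicTheory V0 A0 P0 S0 U0) (Δ1 : DynamicTheory V1 A1 P1 S1 U1)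
    (aEvalC : Ac → Set (S0 × S1)) (fvAC : Ac → Set (V0 ⊕ V1))
    (hCfin : ∀ a : Ac, (fvAC a).Finite)
    (hCover : ∀ (a : Ac) (μ ν : S0 × S1),
      (∀ v ∈ fvAC a, hetVal Δ0.val Δ1.val μ v = hetVal Δ0.val Δ1.val ν v) →
      (μ ∈ aEvalC a ↔ ν ∈ aEvalC a)) :
    (∀ φ : Formula V0 A0 P0,
      Valid Δ0.val Δ0.atomEval Δ0.progEval φ →
      Valid (hetVal Δ0.val Δ1.val) (hetAtomEval Δ0.atomEval Δ1.atomEval aEvalC)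
        (regProgEval (hetVal Δ0.val Δ1.val)
          (hetAtomEval Δ0.atomEval Δ1.atomEval aEvalC)
          (havocProgEval (hetVal Δ0.val Δ1.val)
            (hetProgEval Δ0.val Δ1.val Δ0.progEval Δ1.progEval)))
        (Formula.map Sum.inl Sum.inl
          (fun p => RegProg.base (Sum.inl (Sum.inl p))) φ)) ∧
    (∀ φ : Formula V1 A1 P1,
      Valid Δ1.val Δ1.atomEval Δ1.progEval φ →
      Valid (hetVal Δ0.val Δ1.val) (hetAtomEval Δ0.atomEval Δ1.atomEval aEvalC)
        (regProgEval (hetVal Δ0.val Δ1.val)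
          (hetAtomEval Δ0.atomEval Δ1.atomEval aEvalC)
          (havocProgEval (hetVal Δ0.val Δ1.val)
            (hetProgEval Δ0.val Δ1.val Δ0.progEval Δ1.progEval)))
        (Formula.map Sum.inr (fun a => Sum.inr (Sum.inl a))
          (fun p => RegProg.base (Sum.inl (Sum.inr p))) φ)) := by
  set hv := hetVal Δ0.val Δ1.val
  set hA := hetAtomEval Δ0.atomEval Δ1.atomEval aEvalC
  set hP := regProgEval hv hA
    (havocProgEval hv (hetProgEval Δ0.val Δ1.val Δ0.progEval Δ1.progEval))
  constructor
  · intro φ hval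
    have key := sem_map_proj Δ0.val Δ0.atomEval Δ0.progEval hv hA hP
      (Prod.fst) (Sum.inl) (Sum.inl) (fun p => RegProg.base (Sum.inl (Sum.inl p)))
      (fun a μ => Iff.rfl)
      (fun v μ ν h w hw => by
        have := h (Sum.inl w) (by simp [hw])
        simpa [hv, hetVal] using this)
      (fun v μ ν0 h => ⟨(ν0, μ.2), rfl, by
        rintro (w | w) hw
        · exact congrArg Sum.inl (h w (by simp_all))
        · rfl⟩)
      (fun p μ ν h => h.1)
      (fun p μ ν0 h => ⟨(ν0, μ.2), rfl, h, fun v => rfl⟩)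
    apply Set.eq_univ_of_forall
    intro μ
    rw [Valid] at hval
    exact (key φ μ).mpr (hval ▸ Set.mem_univ _)
  · intro φ hval
    have key := sem_map_proj Δ1.val Δ1.atomEval Δ1.progEval hv hA hP
      (Prod.snd) (Sum.inr) (fun a => Sum.inr (Sum.inl a))
      (fun p => RegProg.base (Sum.inl (Sum.inr p)))
      (fun a μ => Iff.rfl)
      (fun v μ ν h w hw => by
        have := h (Sum.inr w) (by simp [hw])
        simpa [hv, hetVal] using this)
      (fun v μ ν0 h => ⟨(μ.1, ν0), rfl, by
        rintro (w | w) hw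
        · rfl
        · exact congrArg Sum.inr (h w (by simp_all))⟩)
      (fun p μ ν h => h.1)
      (fun p μ ν0 h => ⟨(μ.1, ν0), rfl, h, fun v => rfl⟩)
    apply Set.eq_univ_of_forall
    intro μ
    rw [Valid] at hval
    exact (key φ μ).mpr (hval ▸ Set.mem_univ _)
end
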